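/- arXiv:1308.4584 — 6 statements merged into one kernel-verified Lean document; each statement's English description precedes it below -/
import Mathlib

section
/- Let u, V, g be complex-valued functions of a real variable λ, with u and g differentiable at λ₀, and suppose V(λ₀)² ≠ g(λ₀)² and that g satisfies the quadrant Löwner equation at λ₀: g′(λ₀) = ( g(λ₀) / (V(λ₀)² − g(λ₀)²) ) · u′(λ₀). Define g̃ := g² + 2u and U := V² + 2u (so U(λ₀) − g̃(λ₀) = V(λ₀)² − g(λ₀)² ≠ 0). Then g̃ is differentiable at λ₀ and satisfies g̃′(λ₀) = ( 2 V(λ₀)² / (U(λ₀) − g̃(λ₀)) ) · u′(λ₀). -/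
/-!
Differentiating `g̃ = g² + 2u` gives `g̃′ = 2 g g′ + 2 u′`. Substituting the quadrant equation
`g′ = g / (V² − g²) · u′` turns this into `(2 g² / (V² − g²) + 2) · u′ = 2 V² / (V² − g²) · u′`,
and `V² − g² = U − g̃` because the `2u` terms cancel.
-/

section Folding

variable {𝕜 𝔸 : Type*} [NontriviallyNormedField 𝕜] [NormedField 𝔸] [NormedAlgebra 𝕜 𝔸]
  {g u : 𝕜 → 𝔸} {g' u' : 𝔸} {x : 𝕜}

theorem HasDerivAt.sq_add_two_mul (hg : HasDerivAt g g' x) (hu : HasDerivAt u u' x) :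
    HasDerivAt (fun l => g l ^ 2 + 2 * u l) (2 * g x * g' + 2 * u') x := by
  simpa using (hg.fun_pow 2).fun_add (hu.const_mul 2)

theorem two_mul_mul_quadrant_add_two_mul {v w u' : 𝔸} (h : v ^ 2 ≠ w ^ 2) :
    2 * w * (w / (v ^ 2 - w ^ 2) * u') + 2 * u' = 2 * v ^ 2 / (v ^ 2 - w ^ 2) * u' := by
  have hsub : v ^ 2 - w ^ 2 ≠ 0 := sub_ne_zero.mpr h
  field_simp
  ring

theorem HasDerivAt.fold_quadrant_loewner {v : 𝔸} (hne : v ^ 2 ≠ g x ^ 2)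
    (hg : HasDerivAt g (g x / (v ^ 2 - g x ^ 2) * u') x) (hu : HasDerivAt u u' x) :
    HasDerivAt (fun l => g l ^ 2 + 2 * u l)
      (2 * v ^ 2 / ((v ^ 2 + 2 * u x) - (g x ^ 2 + 2 * u x)) * u') x := by
  rw [add_sub_add_right_eq_sub, ← two_mul_mul_quadrant_add_two_mul hne]
  exact hg.sq_add_two_mul hu

end Folding

/-- (Proposition 5.1(i), computational content.)  If `g` satisfies the
quadrant Löwner equation `g′ = g/(V² − g²)·u′` at `l₀` with `V(l₀)² ≠ g(l₀)²`, then
`g̃ := g² + 2u` is differentiable at `l₀` and satisfies the chordal Löwner equation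
`g̃′ = 2V²/(U − g̃)·u′` with `U := V² + 2u`. -/
theorem quadrant_to_chordal_loewner (u V g : ℝ → ℂ) (l₀ : ℝ)
    (hu : DifferentiableAt ℝ u l₀) (hg : DifferentiableAt ℝ g l₀)
    (hne : V l₀ ^ 2 ≠ g l₀ ^ 2)
    (hql : deriv g l₀ = g l₀ / (V l₀ ^ 2 - g l₀ ^ 2) * deriv u l₀) :
    DifferentiableAt ℝ (fun l => g l ^ 2 + 2 * u l) l₀ ∧
    deriv (fun l => g l ^ 2 + 2 * u l) l₀ =
      2 * V l₀ ^ 2 / ((V l₀ ^ 2 + 2 * u l₀) - (g l₀ ^ 2 + 2 * u l₀)) * deriv u l₀ := by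
  have hchordal := HasDerivAt.fold_quadrant_loewner hne (hql ▸ hg.hasDerivAt) hu.hasDerivAt
  exact ⟨hchordal.differentiableAt, hchordal.deriv⟩
end

section
/- Let ũ, U, V, g̃ be complex-valued functions of a real variable λ, differentiable at λ₀ (with V⁴ = (V²)² differentiable at λ₀), such that g̃(λ₀) ≠ U(λ₀), g̃ satisfies the chordal Löwner equation at λ₀: g̃′(λ₀) = ũ′(λ₀) / (g̃(λ₀) − U(λ₀)), and V satisfies the ordinary differential equation (d/dλ)(V⁴)(λ₀) − 2 U′(λ₀) V(λ₀)² = 2 ũ′(λ₀). Define u := (U − V²)/2 and q := g̃ − 2u (so V(λ₀)² − q(λ₀) = U(λ₀) − g̃(λ₀) ≠ 0). Then q is differentiable at λ₀ and satisfies q′(λ₀) = ( 2 q(λ₀) / (V(λ₀)² − q(λ₀)) ) · u′(λ₀); that is, q = g² satisfies the squared form of the quadrant Löwner equation with driving function V and datum u. -/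
/-! With `u = (U - V²)/2`, the ODE for `V` says exactly `ũ' = -2V²u'`, so the chordal equation
reads `g̃' = 2V²u'/(U - g̃)`. Since `q = g̃ - 2u` and `V² - q = U - g̃`, this gives
`q' = g̃' - 2u' = 2u'(V² - (U - g̃))/(U - g̃) = 2q u'/(V² - q)`. -/

section Algebra

variable {K : Type*} [Field K] [NeZero (2 : K)]

theorem chordal_datum_deriv_eq_of_ode {U' V V' ut' : K}
    (hode : 4 * V ^ 3 * V' - 2 * U' * V ^ 2 = 2 * ut') :
    ut' = -V ^ 2 * (U' - 2 * V * V') := by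
  apply mul_left_cancel₀ (two_ne_zero (α := K))
  linear_combination -hode

theorem quadrant_loewner_of_chordal_loewner {g U V g' U' V' ut' : K} (hne : g ≠ U)
    (hcl : g' = ut' / (g - U)) (hode : 4 * V ^ 3 * V' - 2 * U' * V ^ 2 = 2 * ut') :
    g' - (U' - 2 * V * V') =
      2 * (g - (U - V ^ 2)) / (V ^ 2 - (g - (U - V ^ 2))) * ((U' - 2 * V * V') / 2) := by
  have hgU : g - U ≠ 0 := sub_ne_zero.mpr hne
  have hden : V ^ 2 - (g - (U - V ^ 2)) = -(g - U) := by ring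
  rw [hcl, chordal_datum_deriv_eq_of_ode hode, hden]
  field_simp
  ring

end Algebra

theorem chordal_to_quadrant_loewner_general (ut U V gt : ℝ → ℂ) (l₀ : ℝ)
    (hU : DifferentiableAt ℝ U l₀)
    (hV : DifferentiableAt ℝ V l₀) (hgt : DifferentiableAt ℝ gt l₀)
    (hne : gt l₀ ≠ U l₀)
    (hcl : deriv gt l₀ = deriv ut l₀ / (gt l₀ - U l₀))
    (hode : deriv (fun l => V l ^ 4) l₀ - 2 * deriv U l₀ * V l₀ ^ 2 = 2 * deriv ut l₀) :
    DifferentiableAt ℝ (fun l => gt l - (U l - V l ^ 2)) l₀ ∧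
    deriv (fun l => gt l - (U l - V l ^ 2)) l₀ =
      2 * (gt l₀ - (U l₀ - V l₀ ^ 2)) / (V l₀ ^ 2 - (gt l₀ - (U l₀ - V l₀ ^ 2))) *
        deriv (fun l => (U l - V l ^ 2) / 2) l₀ := by
  have hV2 : HasDerivAt (fun l => V l ^ 2) (2 * V l₀ * deriv V l₀) l₀ := by
    simpa using hV.hasDerivAt.fun_pow 2
  have hu := hU.hasDerivAt.fun_sub hV2
  have hq := hgt.hasDerivAt.fun_sub hu
  have hV4 : deriv (fun l => V l ^ 4) l₀ = 4 * V l₀ ^ 3 * deriv V l₀ := by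
    simpa using deriv_fun_pow hV 4
  refine ⟨hq.differentiableAt, ?_⟩
  rw [hq.deriv, (hu.div_const 2).deriv]
  exact quadrant_loewner_of_chordal_loewner hne hcl (hV4 ▸ hode)

/-- (Proposition 5.1(ii), computational content.)  Let `ut = ũ`, `U`, `V`,
`gt = g̃` be differentiable at `l₀` with `g̃(l₀) ≠ U(l₀)`, suppose `g̃` satisfies the chordal
Löwner equation `g̃′ = ũ′/(g̃ − U)` at `l₀`, and suppose `V` satisfies the ODE
`(V⁴)′ − 2U′V² = 2ũ′` at `l₀`.  Define `u := (U − V²)/2` and `q := g̃ − 2u = g̃ − (U − V²)`.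
Then `q` is differentiable at `l₀` and satisfies the squared quadrant Löwner equation
`q′ = 2q/(V² − q)·u′`. -/
theorem chordal_to_quadrant_loewner (ut U V gt : ℝ → ℂ) (l₀ : ℝ)
    (hut : DifferentiableAt ℝ ut l₀) (hU : DifferentiableAt ℝ U l₀)
    (hV : DifferentiableAt ℝ V l₀) (hgt : DifferentiableAt ℝ gt l₀)
    (hne : gt l₀ ≠ U l₀)
    (hcl : deriv gt l₀ = deriv ut l₀ / (gt l₀ - U l₀))
    (hode : deriv (fun l => V l ^ 4) l₀ - 2 * deriv U l₀ * V l₀ ^ 2 = 2 * deriv ut l₀) :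
    DifferentiableAt ℝ (fun l => gt l - (U l - V l ^ 2)) l₀ ∧
    deriv (fun l => gt l - (U l - V l ^ 2)) l₀ =
      2 * (gt l₀ - (U l₀ - V l₀ ^ 2)) / (V l₀ ^ 2 - (gt l₀ - (U l₀ - V l₀ ^ 2))) *
        deriv (fun l => (U l - V l ^ 2) / 2) l₀ :=
  chordal_to_quadrant_loewner_general ut U V gt l₀ hU hV hgt hne hcl hode
end

section
/- Let Ω ⊆ ℝ² be open with coordinates (λ₁, λ₂), and let u, W₁, W₂ : Ω → ℝ be twice continuously differentiable with W₁ ≠ W₂ everywhere on Ω, satisfying the Gibbons–Tsarev system: ∂W₁/∂λ₂ = (2W₁/(W₂ − W₁)) ∂u/∂λ₂, ∂W₂/∂λ₁ = (2W₂/(W₁ − W₂)) ∂u/∂λ₁, and ∂²u/∂λ₁∂λ₂ = (2(W₁ + W₂)/(W₁ − W₂)²) (∂u/∂λ₁)(∂u/∂λ₂). For i = 1, 2 define the first-order operator A_i acting on twice continuously differentiable functions f(w, λ₁, λ₂) (w real) by A_i f := −( w/(W_i − w²) ) (∂u/∂λ_i) (∂f/∂w). Then at every point (w, λ₁, λ₂)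 with w² ≠ W₁(λ₁,λ₂) and w² ≠ W₂(λ₁,λ₂), the operators ∂/∂λ₁ − A₁ and ∂/∂λ₂ − A₂ commute: (∂_{λ₁} − A₁)((∂_{λ₂} − A₂)f) = (∂_{λ₂} − A₂)((∂_{λ₁} − A₁)f) for every twice continuously differentiable f. -/
/-- Partial derivative of `F(w, l₁, l₂)` with respect to the first variable `w`. -/
noncomputable def pderivW (F : ℝ × ℝ × ℝ → ℝ) (p : ℝ × ℝ × ℝ) : ℝ :=
  deriv (fun w => F (w, p.2.1, p.2.2)) p.1

/-- Partial derivative of `F(w, l₁, l₂)` with respect to `l₁`. -/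
noncomputable def pderivL1 (F : ℝ × ℝ × ℝ → ℝ) (p : ℝ × ℝ × ℝ) : ℝ :=
  deriv (fun x => F (p.1, x, p.2.2)) p.2.1

/-- Partial derivative of `F(w, l₁, l₂)` with respect to `l₂`. -/
noncomputable def pderivL2 (F : ℝ × ℝ × ℝ → ℝ) (p : ℝ × ℝ × ℝ) : ℝ :=
  deriv (fun x => F (p.1, p.2.1, x)) p.2.2

/-- Partial derivative of `u(l₁, l₂)` with respect to `l₁`. -/
noncomputable def pderiv1 (F : ℝ × ℝ → ℝ) (x : ℝ × ℝ) : ℝ :=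
  deriv (fun s => F (s, x.2)) x.1

/-- Partial derivative of `u(l₁, l₂)` with respect to `l₂`. -/
noncomputable def pderiv2 (F : ℝ × ℝ → ℝ) (x : ℝ × ℝ) : ℝ :=
  deriv (fun s => F (x.1, s)) x.2

/-- The first-order operator `Aᵢ f = −(w/(Wᵢ − w²))·(∂u/∂λᵢ)·(∂f/∂w)`, where `Wᵢ = Vᵢ²`
is the squared driving function and `ui = ∂u/∂λᵢ`. -/
noncomputable def Aop (Wi : ℝ × ℝ → ℝ) (ui : ℝ × ℝ → ℝ) (F : ℝ × ℝ × ℝ → ℝ)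
    (p : ℝ × ℝ × ℝ) : ℝ :=
  -(p.1 / (Wi p.2 - p.1 ^ 2)) * ui p.2 * pderivW F p

/-!
The operators are `X = ∂_{λ₁} - α ∂_w` and `Y = ∂_{λ₂} - β ∂_w` with the Löwner coefficients
`α = -w u₁ / (W₁ - w²)`, `β = -w u₂ / (W₂ - w²)`. Since the second derivatives of `f` commute,
`XY - YX` is the first-order operator `(∂₂α - ∂₁β + α ∂_w β - β ∂_w α) ∂_w`, and its coefficient
is a rational expression in `w`, `Wᵢ`, `∂ⱼWᵢ`, `∂ᵢu` and `∂₁∂₂u = ∂₂∂₁u` which the Gibbons–Tsarev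
equations make vanish identically.
-/

open Topology

section Directional

variable {E : Type*} [NormedAddCommGroup E] [NormedSpace ℝ E] {F α β : E → ℝ} {p : E}

theorem ContDiffAt.differentiableAt_fderiv_apply (hF : ContDiffAt ℝ 2 F p) (v : E) :
    DifferentiableAt ℝ (fun q => fderiv ℝ F q v) p :=
  ((hF.fderiv_right (m := 1) le_rfl).differentiableAt one_ne_zero).clm_apply
    (differentiableAt_const v)

theorem fderiv_fderiv_apply_comm (hF : ContDiffAt ℝ 2 F p) (a b : E) :
    fderiv ℝ (fun q => fderiv ℝ F q b) p a = fderiv ℝ (fun q => fderiv ℝ F q a) p b := by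
  have hD : DifferentiableAt ℝ (fderiv ℝ F) p :=
    (hF.fderiv_right (m := 1) le_rfl).differentiableAt one_ne_zero
  rw [fderiv_clm_apply hD (differentiableAt_const b),
    fderiv_clm_apply hD (differentiableAt_const a)]
  simpa using hF.isSymmSndFDerivAt (by simp) a b

theorem fderiv_commutator (hF : ContDiffAt ℝ 2 F p) (hα : DifferentiableAt ℝ α p)
    (hβ : DifferentiableAt ℝ β p) (v₀ v₁ v₂ : E) :
    fderiv ℝ (fun q => fderiv ℝ F q v₂ - β q * fderiv ℝ F q v₀) p v₁
        - α p * fderiv ℝ (fun q => fderiv ℝ F q v₂ - β q * fderiv ℝ F q v₀) p v₀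
      - (fderiv ℝ (fun q => fderiv ℝ F q v₁ - α q * fderiv ℝ F q v₀) p v₂
        - β p * fderiv ℝ (fun q => fderiv ℝ F q v₁ - α q * fderiv ℝ F q v₀) p v₀)
    = (fderiv ℝ α p v₂ - fderiv ℝ β p v₁ + α p * fderiv ℝ β p v₀ - β p * fderiv ℝ α p v₀)
      * fderiv ℝ F p v₀ := by
  have hD := hF.differentiableAt_fderiv_apply
  have expand : ∀ γ : E → ℝ, DifferentiableAt ℝ γ p → ∀ v w,
      fderiv ℝ (fun q => fderiv ℝ F q w - γ q * fderiv ℝ F q v₀) p v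
        = fderiv ℝ (fun q => fderiv ℝ F q w) p v
          - (γ p * fderiv ℝ (fun q => fderiv ℝ F q v₀) p v + fderiv ℝ F p v₀ * fderiv ℝ γ p v) :=
    fun γ hγ v w => by
      rw [fderiv_fun_sub (hD w) (hγ.fun_mul (hD v₀)), fderiv_fun_mul hγ (hD v₀)]
      simp
  rw [expand β hβ, expand β hβ, expand α hα, expand α hα, fderiv_fderiv_apply_comm hF v₁ v₂,
    fderiv_fderiv_apply_comm hF v₀ v₁, fderiv_fderiv_apply_comm hF v₀ v₂]
  ring

end Directional

section Partial

variable {F α β : ℝ × ℝ × ℝ → ℝ} {p : ℝ × ℝ × ℝ} {g : ℝ × ℝ → ℝ} {x : ℝ × ℝ}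

theorem pderivW_eq_fderiv (h : DifferentiableAt ℝ F p) : pderivW F p = fderiv ℝ F p (1, 0, 0) :=
  (h.hasFDerivAt.comp_hasDerivAt p.1 ((hasDerivAt_id _).prodMk (hasDerivAt_const _ _))).deriv

theorem pderivL1_eq_fderiv (h : DifferentiableAt ℝ F p) : pderivL1 F p = fderiv ℝ F p (0, 1, 0) :=
  (h.hasFDerivAt.comp_hasDerivAt p.2.1 ((hasDerivAt_const _ _).prodMk
    ((hasDerivAt_id _).prodMk (hasDerivAt_const _ _)))).deriv

theorem pderivL2_eq_fderiv (h : DifferentiableAt ℝ F p) : pderivL2 F p = fderiv ℝ F p (0, 0, 1) :=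
  (h.hasFDerivAt.comp_hasDerivAt p.2.2 ((hasDerivAt_const _ _).prodMk
    ((hasDerivAt_const _ _).prodMk (hasDerivAt_id _)))).deriv

theorem pderiv1_eq_fderiv (h : DifferentiableAt ℝ g x) : pderiv1 g x = fderiv ℝ g x (1, 0) :=
  (h.hasFDerivAt.comp_hasDerivAt x.1 ((hasDerivAt_id _).prodMk (hasDerivAt_const _ _))).deriv

theorem pderiv2_eq_fderiv (h : DifferentiableAt ℝ g x) : pderiv2 g x = fderiv ℝ g x (0, 1) :=
  (h.hasFDerivAt.comp_hasDerivAt x.2 ((hasDerivAt_const _ _).prodMk (hasDerivAt_id _))).deriv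

theorem hasDerivAt_pderiv1 (h : DifferentiableAt ℝ g x) :
    HasDerivAt (fun s => g (s, x.2)) (pderiv1 g x) x.1 :=
  (h.comp x.1 (differentiableAt_id.prodMk (differentiableAt_const _))).hasDerivAt

theorem hasDerivAt_pderiv2 (h : DifferentiableAt ℝ g x) :
    HasDerivAt (fun s => g (x.1, s)) (pderiv2 g x) x.2 :=
  (h.comp x.2 ((differentiableAt_const _).prodMk differentiableAt_id)).hasDerivAt

theorem pderiv1_eventuallyEq_fderiv (hg : ContDiffAt ℝ 2 g x) :
    pderiv1 g =ᶠ[𝓝 x] fun y => fderiv ℝ g y (1, 0) := by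
  filter_upwards [hg.eventually (by simp)] with y hy
  exact pderiv1_eq_fderiv (hy.differentiableAt two_ne_zero)

theorem pderiv2_eventuallyEq_fderiv (hg : ContDiffAt ℝ 2 g x) :
    pderiv2 g =ᶠ[𝓝 x] fun y => fderiv ℝ g y (0, 1) := by
  filter_upwards [hg.eventually (by simp)] with y hy
  exact pderiv2_eq_fderiv (hy.differentiableAt two_ne_zero)

theorem ContDiffAt.differentiableAt_pderiv1 (hg : ContDiffAt ℝ 2 g x) :
    DifferentiableAt ℝ (pderiv1 g) x :=
  (pderiv1_eventuallyEq_fderiv hg).differentiableAt_iff.2 (hg.differentiableAt_fderiv_apply _)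

theorem ContDiffAt.differentiableAt_pderiv2 (hg : ContDiffAt ℝ 2 g x) :
    DifferentiableAt ℝ (pderiv2 g) x :=
  (pderiv2_eventuallyEq_fderiv hg).differentiableAt_iff.2 (hg.differentiableAt_fderiv_apply _)

theorem pderiv2_pderiv1_comm (hg : ContDiffAt ℝ 2 g x) :
    pderiv2 (pderiv1 g) x = pderiv1 (pderiv2 g) x := by
  rw [pderiv2_eq_fderiv hg.differentiableAt_pderiv1, pderiv1_eq_fderiv hg.differentiableAt_pderiv2,
    (pderiv1_eventuallyEq_fderiv hg).fderiv_eq, (pderiv2_eventuallyEq_fderiv hg).fderiv_eq,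
    fderiv_fderiv_apply_comm hg]

theorem pderiv_commutator (hF : ContDiff ℝ 2 F) (hα : DifferentiableAt ℝ α p)
    (hβ : DifferentiableAt ℝ β p) :
    pderivL1 (fun q => pderivL2 F q - β q * pderivW F q) p
        - α p * pderivW (fun q => pderivL2 F q - β q * pderivW F q) p
      - (pderivL2 (fun q => pderivL1 F q - α q * pderivW F q) p
        - β p * pderivW (fun q => pderivL1 F q - α q * pderivW F q) p)
    = (pderivL2 α p - pderivL1 β p + α p * pderivW β p - β p * pderivW α p) * pderivW F p := by
  have hF1 : ∀ q, DifferentiableAt ℝ F q := fun q => hF.contDiffAt.differentiableAt two_ne_zero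
  simp only [pderivW_eq_fderiv (hF1 _), pderivL1_eq_fderiv (hF1 _), pderivL2_eq_fderiv (hF1 _)]
  have hD := hF.contDiffAt.differentiableAt_fderiv_apply (p := p)
  have hY := (hD (0, 0, 1)).fun_sub (hβ.fun_mul (hD (1, 0, 0)))
  have hX := (hD (0, 1, 0)).fun_sub (hα.fun_mul (hD (1, 0, 0)))
  rw [pderivL1_eq_fderiv hY, pderivW_eq_fderiv hY, pderivL2_eq_fderiv hX, pderivW_eq_fderiv hX,
    pderivL2_eq_fderiv hα, pderivL1_eq_fderiv hβ, pderivW_eq_fderiv hα, pderivW_eq_fderiv hβ]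
  exact fderiv_commutator hF.contDiffAt hα hβ _ _ _

end Partial

section LoewnerCoeff

/-- `Aop W v F q = loewnerCoeff W v q * pderivW F q` holds definitionally. -/
noncomputable def loewnerCoeff (W v : ℝ × ℝ → ℝ) (q : ℝ × ℝ × ℝ) : ℝ :=
  -(q.1 / (W q.2 - q.1 ^ 2)) * v q.2

variable {W v : ℝ × ℝ → ℝ} {q : ℝ × ℝ × ℝ}

theorem differentiableAt_loewnerCoeff (hW : DifferentiableAt ℝ W q.2)
    (hv : DifferentiableAt ℝ v q.2) (hq : W q.2 - q.1 ^ 2 ≠ 0) :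
    DifferentiableAt ℝ (loewnerCoeff W v) q := by
  unfold loewnerCoeff
  fun_prop (disch := exact hq)

theorem pderivW_loewnerCoeff (hq : W q.2 - q.1 ^ 2 ≠ 0) :
    pderivW (loewnerCoeff W v) q = -v q.2 * (W q.2 + q.1 ^ 2) / (W q.2 - q.1 ^ 2) ^ 2 := by
  have hpow : HasDerivAt (fun w => w ^ 2) (2 * q.1) q.1 := by simpa using hasDerivAt_pow 2 q.1
  have h := ((hasDerivAt_id' q.1).fun_div ((hasDerivAt_const _ (W q.2)).fun_sub hpow)
    hq).fun_neg.mul_const (v q.2)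
  refine h.deriv.trans ?_
  field_simp
  ring

theorem pderivL1_loewnerCoeff (hW : DifferentiableAt ℝ W q.2) (hv : DifferentiableAt ℝ v q.2)
    (hq : W q.2 - q.1 ^ 2 ≠ 0) :
    pderivL1 (loewnerCoeff W v) q = -q.1 * (pderiv1 v q.2 * (W q.2 - q.1 ^ 2)
      - v q.2 * pderiv1 W q.2) / (W q.2 - q.1 ^ 2) ^ 2 := by
  have h := ((hasDerivAt_const q.2.1 q.1).fun_div ((hasDerivAt_pderiv1 hW).sub_const (q.1 ^ 2))
    hq).fun_neg.fun_mul (hasDerivAt_pderiv1 hv)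
  refine h.deriv.trans ?_
  field_simp
  ring

theorem pderivL2_loewnerCoeff (hW : DifferentiableAt ℝ W q.2) (hv : DifferentiableAt ℝ v q.2)
    (hq : W q.2 - q.1 ^ 2 ≠ 0) :
    pderivL2 (loewnerCoeff W v) q = -q.1 * (pderiv2 v q.2 * (W q.2 - q.1 ^ 2)
      - v q.2 * pderiv2 W q.2) / (W q.2 - q.1 ^ 2) ^ 2 := by
  have h := ((hasDerivAt_const q.2.2 q.1).fun_div ((hasDerivAt_pderiv2 hW).sub_const (q.1 ^ 2))
    hq).fun_neg.fun_mul (hasDerivAt_pderiv2 hv)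
  refine h.deriv.trans ?_
  field_simp
  ring

theorem loewnerCoeff_zero_curvature {u W₁ W₂ : ℝ × ℝ → ℝ} {q : ℝ × ℝ × ℝ}
    (hu : ContDiffAt ℝ 2 u q.2) (hW₁ : DifferentiableAt ℝ W₁ q.2)
    (hW₂ : DifferentiableAt ℝ W₂ q.2) (hne : W₁ q.2 ≠ W₂ q.2)
    (hgt1 : pderiv2 W₁ q.2 = 2 * W₁ q.2 / (W₂ q.2 - W₁ q.2) * pderiv2 u q.2)
    (hgt2 : pderiv1 W₂ q.2 = 2 * W₂ q.2 / (W₁ q.2 - W₂ q.2) * pderiv1 u q.2)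
    (hgt3 : pderiv1 (pderiv2 u) q.2 =
      2 * (W₁ q.2 + W₂ q.2) / (W₁ q.2 - W₂ q.2) ^ 2 * pderiv1 u q.2 * pderiv2 u q.2)
    (hw1 : W₁ q.2 - q.1 ^ 2 ≠ 0) (hw2 : W₂ q.2 - q.1 ^ 2 ≠ 0) :
    pderivL2 (loewnerCoeff W₁ (pderiv1 u)) q - pderivL1 (loewnerCoeff W₂ (pderiv2 u)) q
      + loewnerCoeff W₁ (pderiv1 u) q * pderivW (loewnerCoeff W₂ (pderiv2 u)) q
      - loewnerCoeff W₂ (pderiv2 u) q * pderivW (loewnerCoeff W₁ (pderiv1 u)) q = 0 := by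
  have h12 : W₁ q.2 - W₂ q.2 ≠ 0 := sub_ne_zero.2 hne
  have h21 : W₂ q.2 - W₁ q.2 ≠ 0 := sub_ne_zero.2 hne.symm
  rw [pderivL2_loewnerCoeff hW₁ hu.differentiableAt_pderiv1 hw1,
    pderivL1_loewnerCoeff hW₂ hu.differentiableAt_pderiv2 hw2, pderivW_loewnerCoeff hw1,
    pderivW_loewnerCoeff hw2, pderiv2_pderiv1_comm hu, hgt1, hgt2, hgt3, loewnerCoeff,
    loewnerCoeff]
  field_simp
  ring

end LoewnerCoeff

/-- The Gibbons–Tsarev system is the compatibility condition of the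
quadrant Löwner equations: if `u, W₁, W₂` are `C²` on an open `Ω ⊆ ℝ²` with `W₁ ≠ W₂` on
`Ω` and satisfy the Gibbons–Tsarev system, then at every point `(w, λ₁, λ₂)` with
`λ ∈ Ω`, `w² ≠ W₁(λ)`, `w² ≠ W₂(λ)`, the operators `∂/∂λ₁ − A₁` and `∂/∂λ₂ − A₂` commute
on every `C²` function `f(w, λ₁, λ₂)`. -/
theorem gibbons_tsarev_compatibility
    (Ω : Set (ℝ × ℝ)) (hΩ : IsOpen Ω)
    (u W₁ W₂ : ℝ × ℝ → ℝ)
    (hu : ContDiffOn ℝ 2 u Ω) (hW₁ : ContDiffOn ℝ 2 W₁ Ω) (hW₂ : ContDiffOn ℝ 2 W₂ Ω)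
    (hne : ∀ x ∈ Ω, W₁ x ≠ W₂ x)
    (hgt1 : ∀ x ∈ Ω, pderiv2 W₁ x = 2 * W₁ x / (W₂ x - W₁ x) * pderiv2 u x)
    (hgt2 : ∀ x ∈ Ω, pderiv1 W₂ x = 2 * W₂ x / (W₁ x - W₂ x) * pderiv1 u x)
    (hgt3 : ∀ x ∈ Ω, pderiv1 (pderiv2 u) x =
      2 * (W₁ x + W₂ x) / (W₁ x - W₂ x) ^ 2 * pderiv1 u x * pderiv2 u x)
    (f : ℝ × ℝ × ℝ → ℝ) (hf : ContDiff ℝ 2 f)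
    (p : ℝ × ℝ × ℝ) (hp : p.2 ∈ Ω)
    (hw1 : p.1 ^ 2 ≠ W₁ p.2) (hw2 : p.1 ^ 2 ≠ W₂ p.2) :
    pderivL1 (fun q => pderivL2 f q - Aop W₂ (pderiv2 u) f q) p
      - Aop W₁ (pderiv1 u) (fun q => pderivL2 f q - Aop W₂ (pderiv2 u) f q) p
    = pderivL2 (fun q => pderivL1 f q - Aop W₁ (pderiv1 u) f q) p
      - Aop W₂ (pderiv2 u) (fun q => pderivL1 f q - Aop W₁ (pderiv1 u) f q) p := by
  have hΩp := hΩ.mem_nhds hp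
  have hu' := hu.contDiffAt hΩp
  have hW₁' := (hW₁.contDiffAt hΩp).differentiableAt two_ne_zero
  have hW₂' := (hW₂.contDiffAt hΩp).differentiableAt two_ne_zero
  have hd₁ : W₁ p.2 - p.1 ^ 2 ≠ 0 := sub_ne_zero.2 hw1.symm
  have hd₂ : W₂ p.2 - p.1 ^ 2 ≠ 0 := sub_ne_zero.2 hw2.symm
  rw [← sub_eq_zero]
  refine (pderiv_commutator hf
    (differentiableAt_loewnerCoeff hW₁' hu'.differentiableAt_pderiv1 hd₁)
    (differentiableAt_loewnerCoeff hW₂' hu'.differentiableAt_pderiv2 hd₂)).trans ?_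
  rw [loewnerCoeff_zero_curvature hu' hW₁' hW₂' (hne _ hp) (hgt1 _ hp) (hgt2 _ hp) (hgt3 _ hp)
    hd₁ hd₂, zero_mul]
end

section
/- Let g, W_i, W_j, u be real-valued functions of a real variable s, differentiable at s₀, with g(s₀)² ≠ W_i(s₀), g(s₀)² ≠ W_j(s₀), and W_i(s₀) ≠ W_j(s₀). Suppose g satisfies the quadrant Löwner equation g′(s₀) = ( g(s₀)/(W_j(s₀) − g(s₀)²) ) u′(s₀) and W_i satisfies the Gibbons–Tsarev equation W_i′(s₀) = ( 2W_i(s₀)/(W_j(s₀) − W_i(s₀)) ) u′(s₀). Then the function s ↦ g(s)/(g(s)² − W_i(s)) is differentiable at s₀ with derivative ( g(s₀) / ( (g(s₀)² − W_j(s₀))(g(s₀)² − W_i(s₀)) ) ) · ( (W_i(s₀) + W_j(s₀)) / (W_j(s₀) − W_i(s₀)) ) · u′(s₀). -/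
/-!
After substituting the Löwner and Gibbons–Tsarev equations, the quotient-rule numerator
`g Wi' - (g² + Wi) g'` becomes `g u' ((g² + Wi)/(g² - Wj) + 2 Wi/(Wj - Wi))`, and the bracket
factors as `(g² - Wi)(Wi + Wj)/((g² - Wj)(Wj - Wi))`; its factor `g² - Wi` cancels one power of
the squared denominator.
-/

theorem HasDerivAt.div_sq_sub {g W : ℝ → ℝ} {g' W' x : ℝ} (hg : HasDerivAt g g' x)
    (hW : HasDerivAt W W' x) (h : g x ^ 2 ≠ W x) :
    HasDerivAt (fun s => g s / (g s ^ 2 - W s))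
      ((g x * W' - (g x ^ 2 + W x) * g') / (g x ^ 2 - W x) ^ 2) x := by
  refine (hg.fun_div ((hg.fun_pow 2).fun_sub hW) (sub_ne_zero.mpr h)).congr_deriv ?_
  push_cast
  ring

theorem add_div_sub_add_two_mul_div_sub {X A B : ℝ} (hXB : X ≠ B) (hAB : A ≠ B) :
    (X + A) / (X - B) + 2 * A / (B - A) = (X - A) * (A + B) / ((X - B) * (B - A)) := by
  have hXB₀ : X - B ≠ 0 := sub_ne_zero.mpr hXB
  have hBA₀ : B - A ≠ 0 := sub_ne_zero.mpr hAB.symm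
  field_simp
  ring

theorem chi_generating_function_derivative_general (g Wi Wj u : ℝ → ℝ) (s₀ : ℝ)
    (hg : DifferentiableAt ℝ g s₀) (hWi : DifferentiableAt ℝ Wi s₀)
    (h1 : g s₀ ^ 2 ≠ Wi s₀) (h2 : g s₀ ^ 2 ≠ Wj s₀) (h3 : Wi s₀ ≠ Wj s₀)
    (hql : deriv g s₀ = g s₀ / (Wj s₀ - g s₀ ^ 2) * deriv u s₀)
    (hgt : deriv Wi s₀ = 2 * Wi s₀ / (Wj s₀ - Wi s₀) * deriv u s₀) :
    DifferentiableAt ℝ (fun s => g s / (g s ^ 2 - Wi s)) s₀ ∧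
    deriv (fun s => g s / (g s ^ 2 - Wi s)) s₀ =
      g s₀ / ((g s₀ ^ 2 - Wj s₀) * (g s₀ ^ 2 - Wi s₀)) *
        ((Wi s₀ + Wj s₀) / (Wj s₀ - Wi s₀)) * deriv u s₀ := by
  have hquot := hg.hasDerivAt.div_sq_sub hWi.hasDerivAt h1
  refine ⟨hquot.differentiableAt, hquot.deriv.trans ?_⟩
  set G := g s₀
  set A := Wi s₀
  set B := Wj s₀
  calc (G * deriv Wi s₀ - (G ^ 2 + A) * deriv g s₀) / (G ^ 2 - A) ^ 2
      = G * deriv u s₀ * ((G ^ 2 + A) / (G ^ 2 - B) + 2 * A / (B - A)) / (G ^ 2 - A) ^ 2 := by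
        rw [hql, hgt, ← neg_sub (G ^ 2) B, div_neg]
        ring
    _ = G / ((G ^ 2 - B) * (G ^ 2 - A)) * ((A + B) / (B - A)) * deriv u s₀ := by
        rw [add_div_sub_add_two_mul_div_sub h2 h3]
        field_simp

/-- (Generating-function form of `∂χ_{i,n}/∂λ_j = Γ_ij(χ_{j,n} − χ_{i,n})`.)
Let `g, Wi, Wj, u` be real functions of a real variable `s`, differentiable at `s₀`, with
`g(s₀)² ≠ Wi(s₀)`, `g(s₀)² ≠ Wj(s₀)`, `Wi(s₀) ≠ Wj(s₀)`.  Suppose the quadrant Löwner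
equation `g′ = (g/(Wj − g²))·u′` and the Gibbons–Tsarev equation
`Wi′ = (2Wi/(Wj − Wi))·u′` hold at `s₀`.  Then `s ↦ g/(g² − Wi)` is differentiable at `s₀`
with derivative `(g/((g² − Wj)(g² − Wi)))·((Wi + Wj)/(Wj − Wi))·u′(s₀)`. -/
theorem chi_generating_function_derivative (g Wi Wj u : ℝ → ℝ) (s₀ : ℝ)
    (hg : DifferentiableAt ℝ g s₀) (hWi : DifferentiableAt ℝ Wi s₀)
    (hWj : DifferentiableAt ℝ Wj s₀) (hu : DifferentiableAt ℝ u s₀)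
    (h1 : g s₀ ^ 2 ≠ Wi s₀) (h2 : g s₀ ^ 2 ≠ Wj s₀) (h3 : Wi s₀ ≠ Wj s₀)
    (hql : deriv g s₀ = g s₀ / (Wj s₀ - g s₀ ^ 2) * deriv u s₀)
    (hgt : deriv Wi s₀ = 2 * Wi s₀ / (Wj s₀ - Wi s₀) * deriv u s₀) :
    DifferentiableAt ℝ (fun s => g s / (g s ^ 2 - Wi s)) s₀ ∧
    deriv (fun s => g s / (g s ^ 2 - Wi s)) s₀ =
      g s₀ / ((g s₀ ^ 2 - Wj s₀) * (g s₀ ^ 2 - Wi s₀)) *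
        ((Wi s₀ + Wj s₀) / (Wj s₀ - Wi s₀)) * deriv u s₀ :=
  chi_generating_function_derivative_general g Wi Wj u s₀ hg hWi h1 h2 h3 hql hgt
end

section
/- Let N, K be positive integers, Ω ⊆ ℝ^N open, Γ_ij : Ω → ℝ (i ≠ j) arbitrary functions, R_i : Ω → ℝ differentiable with ∂R_i/∂λ_j = Γ_ij (R_j − R_i) for i ≠ j, and χ_{i,k} : Ω → ℝ (1 ≤ i ≤ N, 1 ≤ k ≤ K) differentiable with ∂χ_{i,k}/∂λ_j = Γ_ij (χ_{j,k} − χ_{i,k}) for i ≠ j and all k, and with χ_{i,1} ≡ 1 for every i. Let U ⊆ ℝ^K be open and λ : U → Ω be differentiable at t₀ ∈ U and satisfy the hodograph relations Σ_{k=1}^K χ_{i,k}(λ(t)) t_k = R_i(λ(t)) for all t ∈ U and all i. Then for every i and every k, ∂λ_i/∂t_k (t₀) = χ_{i,k}(λ(t₀)) · ∂λ_i/∂t_1 (t₀). (In the application, t_1 = x is the first time of the dispersionless BKP hierarchy and the λ_i so obtained give an N-variable diagonal reduction.) -/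
/-!
Differentiating the `i`-th hodograph relation `∑ₗ χ_{i,l}(λ) t_l = R_i(λ)` in `t_m` gives
`χ_{i,m} + ∑_j ∂_m λ_j · (∑ₗ t_l ∂_j χ_{i,l} − ∂_j R_i) = 0`. For `j ≠ i` the bracket equals
`Γ_ij` times the difference of the `j`-th and `i`-th hodograph relations, so it vanishes, and
`χ_{i,m} = A_i · ∂_m λ_i` with `A_i = ∂_i R_i − ∑ₗ t_l ∂_i χ_{i,l}` independent of `m`.
Taking `m = 1`, where `χ_{i,1} = 1`, gives `A_i · ∂_1 λ_i = 1`, and the claim follows.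
-/

/-- Partial derivative of `F : ℝ^N → ℝ` in the `i`-th coordinate direction at `x`. -/
noncomputable def pd {N : ℕ} (i : Fin N) (F : (Fin N → ℝ) → ℝ) (x : Fin N → ℝ) : ℝ :=
  deriv (fun s : ℝ => F (Function.update x i s)) (x i)

open Finset Filter Topology

section PartialDerivative

variable {n : ℕ}

lemma pd_eq_fderiv {F : (Fin n → ℝ) → ℝ} {x : Fin n → ℝ} (hF : DifferentiableAt ℝ F x)
    (i : Fin n) : pd i F x = fderiv ℝ F x (Pi.single i 1) := by
  have hF' : HasFDerivAt F (fderiv ℝ F x) (Function.update x i (x i)) := by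
    rw [Function.update_eq_self]; exact hF.hasFDerivAt
  exact (hF'.comp_hasDerivAt (x i) (hasDerivAt_update x i (x i))).deriv

lemma fderiv_apply_eq_sum_pd {F : (Fin n → ℝ) → ℝ} {x : Fin n → ℝ}
    (hF : DifferentiableAt ℝ F x) (v : Fin n → ℝ) :
    fderiv ℝ F x v = ∑ j, v j * pd j F x := by
  conv_lhs => rw [pi_eq_sum_univ' v]
  simp only [map_sum, map_smul, pd_eq_fderiv hF, smul_eq_mul]

lemma pd_apply_eq_fderiv {m : ℕ} {f : (Fin n → ℝ) → (Fin m → ℝ)} {x : Fin n → ℝ}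
    (hf : DifferentiableAt ℝ f x) (i : Fin n) (j : Fin m) :
    pd i (fun y => f y j) x = fderiv ℝ f x (Pi.single i 1) j := by
  have h : HasFDerivAt (fun y => f y j)
      ((ContinuousLinearMap.proj j : (Fin m → ℝ) →L[ℝ] ℝ).comp (fderiv ℝ f x)) x :=
    (ContinuousLinearMap.proj (R := ℝ) (φ := fun _ : Fin m => ℝ) j).hasFDerivAt.comp x
      hf.hasFDerivAt
  rw [pd_eq_fderiv h.differentiableAt, h.fderiv]
  rfl

end PartialDerivative

section Hodograph

variable {N K : ℕ}

lemma hodograph_relation_fderiv {a : Fin K → (Fin N → ℝ) → ℝ} {r : (Fin N → ℝ) → ℝ}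
    {lam : (Fin K → ℝ) → (Fin N → ℝ)} {t₀ : Fin K → ℝ}
    (ha : ∀ l, DifferentiableAt ℝ (a l) (lam t₀)) (hr : DifferentiableAt ℝ r (lam t₀))
    (hlam : DifferentiableAt ℝ lam t₀)
    (hodo : ∀ᶠ t in 𝓝 t₀, ∑ l, a l (lam t) * t l = r (lam t)) (v : Fin K → ℝ) :
    ∑ l, (a l (lam t₀) * v l + t₀ l * fderiv ℝ (a l) (lam t₀) (fderiv ℝ lam t₀ v)) =
      fderiv ℝ r (lam t₀) (fderiv ℝ lam t₀ v) := by
  have hterm : ∀ l, HasFDerivAt (fun t => a l (lam t) * t l)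
      (a l (lam t₀) • ContinuousLinearMap.proj l + t₀ l • (fderiv ℝ (a l) (lam t₀)).comp
        (fderiv ℝ lam t₀)) t₀ :=
    fun l => ((ha l).hasFDerivAt.comp t₀ hlam.hasFDerivAt).mul
      (ContinuousLinearMap.proj (R := ℝ) (φ := fun _ : Fin K => ℝ) l).hasFDerivAt
  have hlhs := HasFDerivAt.fun_sum (u := univ) fun l _ => hterm l
  have hrhs : HasFDerivAt (fun t => ∑ l, a l (lam t) * t l)
      ((fderiv ℝ r (lam t₀)).comp (fderiv ℝ lam t₀)) t₀ :=
    (hr.hasFDerivAt.comp t₀ hlam.hasFDerivAt).congr_of_eventuallyEq hodo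
  simpa [smul_eq_mul] using congrArg (· v) (hlhs.unique hrhs)

lemma hodograph_relation_pd {a : Fin K → (Fin N → ℝ) → ℝ} {r : (Fin N → ℝ) → ℝ}
    {lam : (Fin K → ℝ) → (Fin N → ℝ)} {t₀ : Fin K → ℝ}
    (ha : ∀ l, DifferentiableAt ℝ (a l) (lam t₀)) (hr : DifferentiableAt ℝ r (lam t₀))
    (hlam : DifferentiableAt ℝ lam t₀)
    (hodo : ∀ᶠ t in 𝓝 t₀, ∑ l, a l (lam t) * t l = r (lam t)) (m : Fin K) :
    a m (lam t₀) + ∑ j, pd m (fun t => lam t j) t₀ *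
      (∑ l, t₀ l * pd j (a l) (lam t₀) - pd j r (lam t₀)) = 0 := by
  have h := hodograph_relation_fderiv ha hr hlam hodo (Pi.single m 1)
  simp only [sum_add_distrib, Pi.single_apply, mul_ite, mul_one, mul_zero, sum_ite_eq',
    mem_univ, if_true, fderiv_apply_eq_sum_pd (ha _), fderiv_apply_eq_sum_pd hr] at h
  simp only [pd_apply_eq_fderiv hlam]
  set v := fderiv ℝ lam t₀ (Pi.single m 1)
  have hswap : ∑ j, v j * ∑ l, t₀ l * pd j (a l) (lam t₀) =
      ∑ l, t₀ l * ∑ j, v j * pd j (a l) (lam t₀) := by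
    simp only [mul_sum]
    rw [sum_comm]
    exact sum_congr rfl fun _ _ => sum_congr rfl fun _ _ => by ring
  simp only [mul_sub, sum_sub_distrib, hswap]
  linear_combination h

lemma hodograph_bracket_eq_zero {R : Fin N → (Fin N → ℝ) → ℝ}
    {χ : Fin N → Fin K → (Fin N → ℝ) → ℝ} {c : ℝ} {x : Fin N → ℝ} {t : Fin K → ℝ} {i j : Fin N}
    (hReq : pd j (R i) x = c * (R j x - R i x))
    (hχeq : ∀ l, pd j (χ i l) x = c * (χ j l x - χ i l x))
    (hodo_i : ∑ l, χ i l x * t l = R i x) (hodo_j : ∑ l, χ j l x * t l = R j x) :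
    ∑ l, t l * pd j (χ i l) x - pd j (R i) x = 0 := by
  have hsum : ∑ l, t l * pd j (χ i l) x =
      c * (∑ l, χ j l x * t l - ∑ l, χ i l x * t l) := by
    simp only [hχeq, mul_sum, ← sum_sub_distrib]
    exact sum_congr rfl fun _ _ => by ring
  rw [hsum, hReq, hodo_i, hodo_j, sub_self]

lemma hodograph_coeff_eq_mul_pd {R : Fin N → (Fin N → ℝ) → ℝ}
    {χ : Fin N → Fin K → (Fin N → ℝ) → ℝ} {Γ : Fin N → ℝ}
    {lam : (Fin K → ℝ) → (Fin N → ℝ)} {t₀ : Fin K → ℝ} {i : Fin N}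
    (hR : DifferentiableAt ℝ (R i) (lam t₀)) (hχ : ∀ l, DifferentiableAt ℝ (χ i l) (lam t₀))
    (hlam : DifferentiableAt ℝ lam t₀)
    (hReq : ∀ j, j ≠ i → pd j (R i) (lam t₀) = Γ j * (R j (lam t₀) - R i (lam t₀)))
    (hχeq : ∀ j, j ≠ i → ∀ l, pd j (χ i l) (lam t₀) = Γ j * (χ j l (lam t₀) - χ i l (lam t₀)))
    (hodo : ∀ᶠ t in 𝓝 t₀, ∀ j, ∑ l, χ j l (lam t) * t l = R j (lam t)) (m : Fin K) :
    χ i m (lam t₀) = (pd i (R i) (lam t₀) - ∑ l, t₀ l * pd i (χ i l) (lam t₀)) *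
      pd m (fun t => lam t i) t₀ := by
  have h := hodograph_relation_pd hχ hR hlam (hodo.mono fun _ h => h i) m
  rw [sum_eq_single i (fun j _ hj => by
      rw [hodograph_bracket_eq_zero (hReq j hj) (hχeq j hj) (hodo.self_of_nhds i)
        (hodo.self_of_nhds j), mul_zero])
    (fun h => (h (mem_univ i)).elim)] at h
  linear_combination h

end Hodograph

theorem hodograph_diagonal_reduction_general {N K : ℕ} (hK : 0 < K)
    (Ω : Set (Fin N → ℝ)) (hΩ : IsOpen Ω)
    (Γ : Fin N → Fin N → (Fin N → ℝ) → ℝ)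
    (R : Fin N → (Fin N → ℝ) → ℝ) (χ : Fin N → Fin K → (Fin N → ℝ) → ℝ)
    (hR : ∀ i, DifferentiableOn ℝ (R i) Ω)
    (hχ : ∀ i k, DifferentiableOn ℝ (χ i k) Ω)
    (hReq : ∀ i j : Fin N, i ≠ j → ∀ x ∈ Ω,
      pd j (R i) x = Γ i j x * (R j x - R i x))
    (hχeq : ∀ i j : Fin N, i ≠ j → ∀ k : Fin K, ∀ x ∈ Ω,
      pd j (χ i k) x = Γ i j x * (χ j k x - χ i k x))
    (hχ1 : ∀ i : Fin N, ∀ x ∈ Ω, χ i ⟨0, hK⟩ x = 1)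
    (U : Set (Fin K → ℝ)) (hU : IsOpen U)
    (lam : (Fin K → ℝ) → (Fin N → ℝ)) (hmap : ∀ t ∈ U, lam t ∈ Ω)
    (t₀ : Fin K → ℝ) (ht₀ : t₀ ∈ U) (hdiff : DifferentiableAt ℝ lam t₀)
    (hodo : ∀ t ∈ U, ∀ i : Fin N, ∑ k, χ i k (lam t) * t k = R i (lam t)) :
    ∀ (i : Fin N) (k : Fin K),
      pd k (fun t => lam t i) t₀ =
        χ i k (lam t₀) * pd (⟨0, hK⟩ : Fin K) (fun t => lam t i) t₀ := by
  intro i k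
  have hx₀ : lam t₀ ∈ Ω := hmap t₀ ht₀
  have hΩ₀ : Ω ∈ 𝓝 (lam t₀) := hΩ.mem_nhds hx₀
  have hodo₀ : ∀ᶠ t in 𝓝 t₀, ∀ j, ∑ l, χ j l (lam t) * t l = R j (lam t) :=
    eventually_of_mem (hU.mem_nhds ht₀) hodo
  have hprop := hodograph_coeff_eq_mul_pd ((hR i).differentiableAt hΩ₀)
    (fun l => (hχ i l).differentiableAt hΩ₀) hdiff (fun j hj => hReq i j hj.symm _ hx₀)
    (fun j hj l => hχeq i j hj.symm l _ hx₀) hodo₀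
  have hfirst := hprop ⟨0, hK⟩
  rw [hχ1 i _ hx₀] at hfirst
  linear_combination pd k (fun t => lam t i) t₀ * hfirst -
    pd (⟨0, hK⟩ : Fin K) (fun t => lam t i) t₀ * hprop k

/-- (Part (ii) of the generalized hodograph lemma, finitely many times.)
Suppose `R_i` and the `χ_{i,k}` satisfy the same linear system `∂F_i/∂λ_j = Γ_ij(F_j − F_i)`
(`i ≠ j`) on an open `Ω ⊆ ℝ^N`, with `χ_{i,1} ≡ 1` (here the index `⟨0, hK⟩ : Fin K` plays
the role of the first time `t₁ = x`).  If `lam : U → Ω` is differentiable at `t₀ ∈ U` and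
satisfies the hodograph relations `Σ_k χ_{i,k}(lam(t))·t_k = R_i(lam(t))` on the open set
`U`, then `∂λ_i/∂t_k(t₀) = χ_{i,k}(lam(t₀))·∂λ_i/∂t₁(t₀)` for every `i` and `k`. -/
theorem hodograph_diagonal_reduction {N K : ℕ} (hN : 0 < N) (hK : 0 < K)
    (Ω : Set (Fin N → ℝ)) (hΩ : IsOpen Ω)
    (Γ : Fin N → Fin N → (Fin N → ℝ) → ℝ)
    (R : Fin N → (Fin N → ℝ) → ℝ) (χ : Fin N → Fin K → (Fin N → ℝ) → ℝ)
    (hR : ∀ i, DifferentiableOn ℝ (R i) Ω)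
    (hχ : ∀ i k, DifferentiableOn ℝ (χ i k) Ω)
    (hReq : ∀ i j : Fin N, i ≠ j → ∀ x ∈ Ω,
      pd j (R i) x = Γ i j x * (R j x - R i x))
    (hχeq : ∀ i j : Fin N, i ≠ j → ∀ k : Fin K, ∀ x ∈ Ω,
      pd j (χ i k) x = Γ i j x * (χ j k x - χ i k x))
    (hχ1 : ∀ i : Fin N, ∀ x ∈ Ω, χ i ⟨0, hK⟩ x = 1)
    (U : Set (Fin K → ℝ)) (hU : IsOpen U)
    (lam : (Fin K → ℝ) → (Fin N → ℝ)) (hmap : ∀ t ∈ U, lam t ∈ Ω)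
    (t₀ : Fin K → ℝ) (ht₀ : t₀ ∈ U) (hdiff : DifferentiableAt ℝ lam t₀)
    (hodo : ∀ t ∈ U, ∀ i : Fin N, ∑ k, χ i k (lam t) * t k = R i (lam t)) :
    ∀ (i : Fin N) (k : Fin K),
      pd k (fun t => lam t i) t₀ =
        χ i k (lam t₀) * pd (⟨0, hK⟩ : Fin K) (fun t => lam t i) t₀ :=
  hodograph_diagonal_reduction_general hK Ω hΩ Γ R χ hR hχ hReq hχeq hχ1 U hU lam hmap t₀ ht₀ hdiff
    hodo
end

section
/- Fix real constants U and c. For real z and real λ with (z² − U)² + 2λ > 0 and 2λ + c > 0, define q(z, λ) := √((z² − U)² + 2λ) + √(2λ + c), W(λ) := √(2λ + c), and u(λ) := (U − √(2λ + c))/2 (real positive square roots). Then at every such point with q(z,λ) ≠ W(λ), ∂q/∂λ = ( 2 q / (W − q) ) · du/dλ; that is, q = g² solves the squared form of the quadrant Löwner equation with squared driving function V² = W = √(2λ + c) and datum u. -/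
/-!
Both `A(λ) = √((z² − U)² + 2λ)` and `W(λ) = √(2λ + c)` solve `y' = 1/y`. For any two such
solutions, `q = A + W` has `q' = 1/A + 1/W = q/(A W)`, while `W − q = −A` and `u' = −W'/2 = −1/(2W)`
turn the right-hand side `2q/(W − q) · u'` into the same `q/(A W)`.
-/

lemma hasDerivAt_sqrt_of_hasDerivAt_two {f : ℝ → ℝ} {t : ℝ} (hf : HasDerivAt f 2 t)
    (hpos : 0 < f t) : HasDerivAt (fun s => √(f s)) (√(f t))⁻¹ t := by
  have hsqrt : √(f t) ≠ 0 := (Real.sqrt_pos.mpr hpos).ne'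
  refine (hf.sqrt hpos.ne').congr_deriv ?_
  field_simp

lemma deriv_add_eq_quadrant_loewner_sq {A W : ℝ → ℝ} {t : ℝ} (U : ℝ)
    (hA : HasDerivAt A (A t)⁻¹ t) (hW : HasDerivAt W (W t)⁻¹ t) (hA0 : A t ≠ 0)
    (hW0 : W t ≠ 0) :
    deriv (fun s => A s + W s) t =
      2 * (A t + W t) / (W t - (A t + W t)) * deriv (fun s => (U - W s) / 2) t := by
  rw [(hA.fun_add hW).deriv, ((hW.const_sub U).div_const 2).deriv, sub_add_cancel_right]
  field_simp
  ring

theorem example_quadrant_loewner_solution_general (U c z l : ℝ)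
    (h1 : (z ^ 2 - U) ^ 2 + 2 * l > 0) (h2 : 2 * l + c > 0) :
    deriv (fun l' : ℝ => Real.sqrt ((z ^ 2 - U) ^ 2 + 2 * l') + Real.sqrt (2 * l' + c)) l =
      2 * (Real.sqrt ((z ^ 2 - U) ^ 2 + 2 * l) + Real.sqrt (2 * l + c)) /
          (Real.sqrt (2 * l + c) -
            (Real.sqrt ((z ^ 2 - U) ^ 2 + 2 * l) + Real.sqrt (2 * l + c))) *
        deriv (fun l' : ℝ => (U - Real.sqrt (2 * l' + c)) / 2) l := by
  have hA : HasDerivAt (fun s => (z ^ 2 - U) ^ 2 + 2 * s) 2 l := by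
    simpa using ((hasDerivAt_id l).const_mul 2).const_add ((z ^ 2 - U) ^ 2)
  have hW : HasDerivAt (fun s => 2 * s + c) 2 l := by
    simpa using ((hasDerivAt_id l).const_mul 2).add_const c
  exact deriv_add_eq_quadrant_loewner_sq U
    (hasDerivAt_sqrt_of_hasDerivAt_two hA h1) (hasDerivAt_sqrt_of_hasDerivAt_two hW h2)
    (Real.sqrt_pos.mpr h1).ne' (Real.sqrt_pos.mpr h2).ne'

/-- With `q(z,λ) := √((z² − U)² + 2λ) + √(2λ + c)`, `W(λ) := √(2λ + c)`
and `u(λ) := (U − √(2λ + c))/2`, at every point with `(z² − U)² + 2λ > 0`, `2λ + c > 0`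
and `q ≠ W`, one has `∂q/∂λ = (2q/(W − q))·du/dλ`; that is, `q = g²` solves the squared
quadrant Löwner equation with squared driving function `V² = W` and datum `u`. -/
theorem example_quadrant_loewner_solution (U c z l : ℝ)
    (h1 : (z ^ 2 - U) ^ 2 + 2 * l > 0) (h2 : 2 * l + c > 0)
    (h3 : Real.sqrt ((z ^ 2 - U) ^ 2 + 2 * l) + Real.sqrt (2 * l + c)
            ≠ Real.sqrt (2 * l + c)) :
    deriv (fun l' : ℝ => Real.sqrt ((z ^ 2 - U) ^ 2 + 2 * l') + Real.sqrt (2 * l' + c)) l =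
      2 * (Real.sqrt ((z ^ 2 - U) ^ 2 + 2 * l) + Real.sqrt (2 * l + c)) /
          (Real.sqrt (2 * l + c) -
            (Real.sqrt ((z ^ 2 - U) ^ 2 + 2 * l) + Real.sqrt (2 * l + c))) *
        deriv (fun l' : ℝ => (U - Real.sqrt (2 * l' + c)) / 2) l :=
  example_quadrant_loewner_solution_general U c z l h1 h2
end
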